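/- arXiv:2005.02529 — 6 statements merged into one kernel-verified Lean document; each statement's English description precedes it below -/
import Mathlib

section
/- Let m, t be positive integers, let p_1, ..., p_m be distinct primes all at least n^{1/(t+1)}, and for each i in [n] define S_i ⊆ ⊔_{k=1}^m ℤ/p_kℤ as the set {(k, i mod p_k) : k ∈ [m]}. Then for all distinct i, j ∈ {1, ..., n}, |S_i ∩ S_j| ≤ t. -/
/-!
If `i ≡ j` modulo more than `t` of the primes, then `i ≡ j` modulo their product, which is at
least `n` because each factor is at least `n^{1/(t+1)}`; two numbers below `n` that agree modulo
something at least `n` are equal.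
-/

open Finset

theorem Nat.ModEq.prod_of_pairwise_coprime {ι : Type*} {s : Finset ι} {f : ι → ℕ} {a b : ℕ}
    (hco : (s : Set ι).Pairwise (Function.onFun Nat.Coprime f)) (h : ∀ i ∈ s, a ≡ b [MOD f i]) :
    a ≡ b [MOD ∏ i ∈ s, f i] := by
  rw [← prod_map_toList, Nat.modEq_list_map_prod_iff]
  · simpa using h
  · exact s.nodup_toList.pairwise_of_forall_ne fun x hx y hy hxy =>
      hco (mem_toList.1 hx) (mem_toList.1 hy) hxy

theorem Finset.le_prod_of_forall_le_pow_card {ι : Type*} {s : Finset ι} {f : ι → ℕ} {n : ℕ}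
    (hs : s.Nonempty) (h : ∀ i ∈ s, n ≤ f i ^ #s) : n ≤ ∏ i ∈ s, f i := by
  refine le_of_pow_le_pow_left₀ hs.card_ne_zero (Nat.zero_le _) ?_
  calc n ^ #s = ∏ _i ∈ s, n := (prod_const n).symm
    _ ≤ ∏ i ∈ s, f i ^ #s := prod_le_prod (fun _ _ => Nat.zero_le _) h
    _ = (∏ i ∈ s, f i) ^ #s := prod_pow s _ f

section ResidueDesign

variable {ι : Type*} [Fintype ι] [DecidableEq ι] (p : ι → ℕ)

def residueDesign (i : ℕ) : Finset (ι × ℕ) :=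
  univ.image fun k => (k, i % p k)

theorem residueDesign_inter (i j : ℕ) :
    residueDesign p i ∩ residueDesign p j =
      ({k | i ≡ j [MOD p k]} : Finset ι).image fun k => (k, i % p k) := by
  ext ⟨k, r⟩
  simp only [residueDesign, mem_inter, mem_image, mem_univ, true_and, mem_filter, Prod.mk.injEq]
  constructor
  · rintro ⟨⟨_, rfl, rfl⟩, ⟨k, rfl, hmod⟩⟩
    exact ⟨k, hmod.symm, rfl, rfl⟩
  · rintro ⟨k, hmod, rfl, rfl⟩
    exact ⟨⟨k, rfl, rfl⟩, ⟨k, rfl, hmod.symm⟩⟩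

theorem card_residueDesign_inter (i j : ℕ) :
    #(residueDesign p i ∩ residueDesign p j) = #{k | i ≡ j [MOD p k]} := by
  rw [residueDesign_inter, card_image_of_injective]
  exact fun _ _ h => (Prod.mk.inj h).1

end ResidueDesign

theorem design_intersection_bound_general (m t n : ℕ)
    (p : Fin m → ℕ) (hp : ∀ k, Nat.Prime (p k)) (hinj : Function.Injective p)
    (hsize : ∀ k, n ≤ p k ^ (t + 1))
    (S : ℕ → Finset (Fin m × ℕ))
    (hS : ∀ i, S i = Finset.univ.image (fun k => (k, i % p k)))
    (i j : ℕ) (hi : i < n) (hj : j < n) (hij : i ≠ j) :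
    (S i ∩ S j).card ≤ t := by
  have hcard : #(S i ∩ S j) = #{k | i ≡ j [MOD p k]} := by
    rw [hS, hS]
    exact card_residueDesign_inter p i j
  by_contra! hlarge
  obtain ⟨K, hK, hKcard⟩ := exists_subset_card_eq (hcard ▸ hlarge : t + 1 ≤ _)
  have hmod : i ≡ j [MOD ∏ k ∈ K, p k] :=
    Nat.ModEq.prod_of_pairwise_coprime
      (fun a _ b _ hab => (Nat.coprime_primes (hp a) (hp b)).2 (hinj.ne hab))
      (fun k hk => (mem_filter.1 (hK hk)).2)
  have hprod : n ≤ ∏ k ∈ K, p k :=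
    le_prod_of_forall_le_pow_card (card_pos.1 (by omega)) (fun k _ => hKcard ▸ hsize k)
  exact hij (hmod.eq_of_lt_of_lt (hi.trans_le hprod) (hj.trans_le hprod))

/-- the Nisan–Wigderson-style design built from residues modulo
distinct primes `p 1, …, p m`, each at least `n^{1/(t+1)}` (i.e. `p k ^ (t+1) ≥ n`),
has pairwise intersections of size at most `t`. -/
theorem design_intersection_bound (m t n : ℕ) (hm : 0 < m) (ht : 0 < t)
    (p : Fin m → ℕ) (hp : ∀ k, Nat.Prime (p k)) (hinj : Function.Injective p)
    (hsize : ∀ k, n ≤ p k ^ (t + 1))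
    (S : ℕ → Finset (Fin m × ℕ))
    (hS : ∀ i, S i = Finset.univ.image (fun k => (k, i % p k)))
    (i j : ℕ) (hi : i < n) (hj : j < n) (hij : i ≠ j) :
    (S i ∩ S j).card ≤ t :=
  design_intersection_bound_general m t n p hp hinj hsize S hS i j hi hj hij
end

section
/- Let G be a graph with n vertices and e edges, and let H be an edgeless graph on ℓ vertices. Then any clique partition of the join G * H (the graph obtained by adding all edges between V(G) and V(H)) has size at least nℓ − e. -/
/-- The join of a graph `G` on `Fin n` with the edgeless graph on `Fin ℓ`:
all edges of `G`, plus all edges between the two sides, and no edges inside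
the second side. -/
def joinEdgeless {n ℓ : ℕ} (G : SimpleGraph (Fin n)) : SimpleGraph (Fin n ⊕ Fin ℓ) where
  Adj u v :=
    match u, v with
    | Sum.inl a, Sum.inl b => G.Adj a b
    | Sum.inl _, Sum.inr _ => True
    | Sum.inr _, Sum.inl _ => True
    | Sum.inr _, Sum.inr _ => False
  symm := by
    constructor
    rintro (a | a) (b | b) h <;> simp_all
    all_goals exact h.symm
  loopless := by
    constructor
    rintro (a | a) h <;> simp_all

/-- `P` is a clique partition of `G`: a collection of cliques (each with at
least two vertices) such that every edge of `G` lies in exactly one member. -/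
def IsCliquePartition {V : Type*} (G : SimpleGraph V) (P : Finset (Finset V)) : Prop :=
  (∀ s ∈ P, G.IsClique (s : Set V) ∧ 2 ≤ s.card) ∧
    ∀ u v : V, G.Adj u v → ∃! s, s ∈ P ∧ u ∈ s ∧ v ∈ s

/-! Each clique `s` of the partition contains at most one vertex of the edgeless side, and its
vertices on the `G` side form a clique `L s` of `G`. The `nℓ` cross edges are covered by the
products `L s × (right part of s)`, so `nℓ ≤ ∑ |L s|`. Since `k ≤ 1 + C(k, 2)`, this is at most
`|P| + ∑ C(|L s|, 2)`, and the last sum counts edges of `G`, each inside at most one `L s` because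
an edge lies in exactly one clique of the partition. -/

open Finset

lemma Nat.le_one_add_choose_two : ∀ k : ℕ, k ≤ 1 + k.choose 2
  | 0 => Nat.zero_le _
  | k + 1 => by rw [Nat.choose_succ_succ, Nat.choose_one_right]; omega

lemma SimpleGraph.IsClique.choose_two_card_le_card_edgeFinset_inter_sym2 {V : Type*}
    [Fintype V] [DecidableEq V] {G : SimpleGraph V} [DecidableRel G.Adj] {t : Finset V}
    (ht : G.IsClique (t : Set V)) : (#t).choose 2 ≤ #(G.edgeFinset ∩ t.sym2) := by
  rw [← Sym2.card_image_offDiag]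
  refine card_le_card fun e he => ?_
  obtain ⟨⟨a, b⟩, hab, rfl⟩ := mem_image.1 he
  obtain ⟨ha, hb, hne⟩ := mem_offDiag.1 hab
  simpa [ha, hb] using ht ha hb hne

namespace IsCliquePartition

variable {V : Type*} {G : SimpleGraph V} {P : Finset (Finset V)}

lemma eq_of_adj (hP : IsCliquePartition G P) {u v : V} (huv : G.Adj u v) {s t : Finset V}
    (hs : s ∈ P) (ht : t ∈ P) (hus : u ∈ s) (hvs : v ∈ s) (hut : u ∈ t) (hvt : v ∈ t) : s = t :=
  (hP.2 u v huv).unique ⟨hs, hus, hvs⟩ ⟨ht, hut, hvt⟩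

end IsCliquePartition

section joinEdgeless

variable {n ℓ : ℕ} {G : SimpleGraph (Fin n)}

lemma isClique_toLeft_of_isClique_joinEdgeless {s : Finset (Fin n ⊕ Fin ℓ)}
    (hs : (joinEdgeless G).IsClique (s : Set (Fin n ⊕ Fin ℓ))) :
    G.IsClique (s.toLeft : Set (Fin n)) := fun _ ha _ hb hab =>
  hs (mem_toLeft.1 ha) (mem_toLeft.1 hb) (Sum.inl_injective.ne hab)

lemma card_toRight_le_one_of_isClique_joinEdgeless {s : Finset (Fin n ⊕ Fin ℓ)}
    (hs : (joinEdgeless G).IsClique (s : Set (Fin n ⊕ Fin ℓ))) : #s.toRight ≤ 1 :=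
  card_le_one_iff.2 fun ha hb => by_contra fun hab =>
    hs (mem_toRight.1 ha) (mem_toRight.1 hb) (Sum.inr_injective.ne hab)

namespace IsCliquePartition

variable {P : Finset (Finset (Fin n ⊕ Fin ℓ))}

lemma mul_le_sum_card_toLeft (hP : IsCliquePartition (joinEdgeless G) P) :
    n * ℓ ≤ ∑ s ∈ P, #s.toLeft := by
  have hcover : (univ : Finset (Fin n × Fin ℓ)) ⊆ P.biUnion fun s => s.toLeft ×ˢ s.toRight := by
    rintro ⟨a, y⟩ -
    obtain ⟨s, ⟨hs, ha, hy⟩, -⟩ := hP.2 (.inl a) (.inr y) trivial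
    exact mem_biUnion.2 ⟨s, hs, mem_product.2 ⟨mem_toLeft.2 ha, mem_toRight.2 hy⟩⟩
  calc n * ℓ = #(univ : Finset (Fin n × Fin ℓ)) := by simp
    _ ≤ ∑ s ∈ P, #(s.toLeft ×ˢ s.toRight) := (card_le_card hcover).trans card_biUnion_le
    _ ≤ ∑ s ∈ P, #s.toLeft := sum_le_sum fun s hs => by
      rw [card_product]
      exact mul_le_of_le_one_right (Nat.zero_le _)
        (card_toRight_le_one_of_isClique_joinEdgeless (hP.1 s hs).1)

lemma sum_choose_two_card_toLeft_le [DecidableRel G.Adj]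
    (hP : IsCliquePartition (joinEdgeless G) P) :
    ∑ s ∈ P, (#s.toLeft).choose 2 ≤ #G.edgeFinset := by
  set E : Finset (Fin n ⊕ Fin ℓ) → Finset (Sym2 (Fin n)) :=
    fun s => G.edgeFinset ∩ s.toLeft.sym2
  have hdisj : (P : Set (Finset (Fin n ⊕ Fin ℓ))).PairwiseDisjoint E := by
    intro s hs t ht hst
    refine disjoint_left.2 fun e hes het => hst ?_
    induction e using Sym2.ind with | h a b => ?_
    simp only [E, mem_inter, SimpleGraph.mem_edgeFinset, SimpleGraph.mem_edgeSet,
      mk_mem_sym2_iff, mem_toLeft] at hes het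
    exact hP.eq_of_adj (u := .inl a) (v := .inl b) hes.1 hs ht hes.2.1 hes.2.2 het.2.1 het.2.2
  calc ∑ s ∈ P, (#s.toLeft).choose 2 ≤ ∑ s ∈ P, #(E s) := sum_le_sum fun s hs =>
        (isClique_toLeft_of_isClique_joinEdgeless
          (hP.1 s hs).1).choose_two_card_le_card_edgeFinset_inter_sym2
    _ = #(P.biUnion E) := (card_biUnion hdisj).symm
    _ ≤ #G.edgeFinset := card_le_card (biUnion_subset.2 fun _ _ => inter_subset_left)

end IsCliquePartition

end joinEdgeless

/-- any clique partition of the join `G * \overline{K_ℓ}` has size at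
least `nℓ − e`, where `G` has `n` vertices and `e` edges. -/
theorem cliquePartition_join_lower_bound (n ℓ : ℕ) (G : SimpleGraph (Fin n))
    [DecidableRel G.Adj]
    (P : Finset (Finset (Fin n ⊕ Fin ℓ)))
    (hP : IsCliquePartition (joinEdgeless (ℓ := ℓ) G) P) :
    n * ℓ ≤ P.card + G.edgeFinset.card := by
  calc n * ℓ ≤ ∑ s ∈ P, #s.toLeft := hP.mul_le_sum_card_toLeft
    _ ≤ ∑ s ∈ P, (1 + (#s.toLeft).choose 2) := sum_le_sum fun s _ => Nat.le_one_add_choose_two _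
    _ = #P + ∑ s ∈ P, (#s.toLeft).choose 2 := by
      rw [sum_add_distrib, sum_const, smul_eq_mul, mul_one]
    _ ≤ #P + #G.edgeFinset := Nat.add_le_add_left hP.sum_choose_two_card_toLeft_le _
end

section
/- Let t ≥ 1 and suppose a_1, b_1, ..., a_t, b_t are positive integers with Σ_{i=1}^t a_i b_i = L for some positive integer L. Then Σ_{i=1}^t (C(a_i, 2) + C(b_i, 2) + 1) ≥ (3/4) · L, with equality achievable when 4 divides L by taking all a_i = b_i = 2. -/
open Finset

/-- `8 (C(a,2) + C(b,2) + 1) - 6ab = 3 (a - b)² + (a - 2)² + (b - 2)²`, so the bound holds even for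
real `a, b`, with equality only at `a = b = 2`. -/
theorem three_mul_mul_le_four_mul_choose_two_add (a b : ℕ) :
    3 * (a * b) ≤ 4 * (a.choose 2 + b.choose 2 + 1) := by
  have hslack : 2 * ((4 * (a.choose 2 + b.choose 2 + 1) : ℚ) - 3 * (a * b))
      = 3 * ((a : ℚ) - b) ^ 2 + ((a : ℚ) - 2) ^ 2 + ((b : ℚ) - 2) ^ 2 := by
    rw [Nat.cast_choose_two, Nat.cast_choose_two]; ring
  have : (0 : ℚ) ≤ 4 * (a.choose 2 + b.choose 2 + 1) - 3 * (a * b) := by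
    linarith [sq_nonneg ((a : ℚ) - b), sq_nonneg ((a : ℚ) - 2), sq_nonneg ((b : ℚ) - 2)]
  exact_mod_cast sub_nonneg.mp this

theorem three_mul_sum_mul_le_four_mul_sum_choose_two_add {ι : Type*} (s : Finset ι)
    (a b : ι → ℕ) :
    3 * ∑ i ∈ s, a i * b i ≤ 4 * ∑ i ∈ s, ((a i).choose 2 + (b i).choose 2 + 1) := by
  rw [mul_sum, mul_sum]
  exact sum_le_sum fun i _ => three_mul_mul_le_four_mul_choose_two_add (a i) (b i)

theorem four_mul_sum_choose_two_add_eq_of_forall_eq_two {ι : Type*} (s : Finset ι)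
    (a b : ι → ℕ) (h : ∀ i, a i = 2 ∧ b i = 2) :
    4 * ∑ i ∈ s, ((a i).choose 2 + (b i).choose 2 + 1) = 3 * ∑ i ∈ s, a i * b i := by
  simp only [h, sum_const, smul_eq_mul]
  norm_num
  ring

theorem crossing_clique_cost_bound_general (t L : ℕ) (a b : Fin t → ℕ)
    (hsum : ∑ i, a i * b i = L) :
    3 * L ≤ 4 * ∑ i, (Nat.choose (a i) 2 + Nat.choose (b i) 2 + 1) ∧
      ((∀ i, a i = 2 ∧ b i = 2) →
        4 * ∑ i, (Nat.choose (a i) 2 + Nat.choose (b i) 2 + 1) = 3 * L) ∧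
      (∀ L' : ℕ, 0 < L' → 4 ∣ L' →
        ∃ (t' : ℕ) (a' b' : Fin t' → ℕ), (∀ i, a' i = 2 ∧ b' i = 2) ∧
          ∑ i, a' i * b' i = L' ∧
          4 * ∑ i, (Nat.choose (a' i) 2 + Nat.choose (b' i) 2 + 1) = 3 * L') := by
  subst hsum
  refine ⟨three_mul_sum_mul_le_four_mul_sum_choose_two_add _ a b,
    four_mul_sum_choose_two_add_eq_of_forall_eq_two _ a b, ?_⟩
  rintro L' - ⟨k, rfl⟩
  have hsum : ∑ _i : Fin k, 2 * 2 = 4 * k := by simp [mul_comm]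
  refine ⟨k, fun _ => 2, fun _ => 2, fun _ => ⟨rfl, rfl⟩, hsum, ?_⟩
  rw [four_mul_sum_choose_two_add_eq_of_forall_eq_two _ _ _ fun _ => ⟨rfl, rfl⟩, hsum]

/-- if `a i, b i` are positive integers with `Σ a i * b i = L > 0`,
then `Σ (C(a i, 2) + C(b i, 2) + 1) ≥ (3/4) L`, with equality when all
`a i = b i = 2` (possible whenever `4 ∣ L`). -/
theorem crossing_clique_cost_bound (t L : ℕ) (ht : 1 ≤ t) (hL : 0 < L)
    (a b : Fin t → ℕ) (ha : ∀ i, 0 < a i) (hb : ∀ i, 0 < b i)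
    (hsum : ∑ i, a i * b i = L) :
    3 * L ≤ 4 * ∑ i, (Nat.choose (a i) 2 + Nat.choose (b i) 2 + 1) ∧
      ((∀ i, a i = 2 ∧ b i = 2) →
        4 * ∑ i, (Nat.choose (a i) 2 + Nat.choose (b i) 2 + 1) = 3 * L) ∧
      (∀ L' : ℕ, 0 < L' → 4 ∣ L' →
        ∃ (t' : ℕ) (a' b' : Fin t' → ℕ), (∀ i, a' i = 2 ∧ b' i = 2) ∧
          ∑ i, a' i * b' i = L' ∧
          4 * ∑ i, (Nat.choose (a' i) 2 + Nat.choose (b' i) 2 + 1) = 3 * L') :=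
  crossing_clique_cost_bound_general t L a b hsum
end

section
/- Fix r ≥ 3 and define f_r(n) as the minimum over graphs G on n vertices of ν_r(G) + ν_r(complement of G), where ν_r(G) is the maximum value of Σ_H (C(|H|,2) − 1)ψ(H) over fractional packings ψ of copies of K_3, ..., K_r in G. Then the sequence f_r(n) / (n(n−1)) is monotonically nondecreasing in n. -/
open Finset

/-- `ψ` is a fractional packing of cliques of sizes `3, …, r` in `G`:
weights lie in `[0,1]`, are supported on cliques of `G` with between `3` and
`r` vertices, and the total weight through each edge is at most `1`. -/
def IsFracCliquePacking {n : ℕ} (r : ℕ) (G : SimpleGraph (Fin n))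
    (ψ : Finset (Fin n) → ℝ) : Prop :=
  (∀ s, 0 ≤ ψ s ∧ ψ s ≤ 1) ∧
  (∀ s, ψ s ≠ 0 → G.IsClique (s : Set (Fin n)) ∧ 3 ≤ s.card ∧ s.card ≤ r) ∧
  (∀ u v : Fin n, G.Adj u v →
    ∑ s ∈ Finset.univ.filter (fun s : Finset (Fin n) => u ∈ s ∧ v ∈ s), ψ s ≤ 1)

/-- `ν_r(G)`: the optimal value of `Σ_H (C(|H|,2) − 1) ψ(H)` over fractional
packings `ψ` of `K_3, …, K_r` in `G`. -/
noncomputable def nuR (r n : ℕ) (G : SimpleGraph (Fin n)) : ℝ :=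
  sSup {x : ℝ | ∃ ψ, IsFracCliquePacking r G ψ ∧
    x = ∑ s : Finset (Fin n), ((s.card.choose 2 : ℝ) - 1) * ψ s}

/-- `f_r(n) = min_G ν_r(G) + ν_r(Gᶜ)` over graphs on `n` vertices. -/
noncomputable def fR (r n : ℕ) : ℝ :=
  sInf {x : ℝ | ∃ G : SimpleGraph (Fin n), x = nuR r n G + nuR r n Gᶜ}

/-!
Delete a vertex `v` from a graph `G` on `n + 1` vertices and push an almost optimal packing of
`G - v` forward to `G`. Every edge of `G` survives in exactly `n - 1` of the graphs `G - v`, so the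
sum of the `n + 1` pushed-forward packings, divided by `n - 1`, is again a packing of `G`. Hence
`∑ᵥ ν_r(G - v) ≤ (n - 1) ν_r(G)`, and likewise for `Gᶜ`; as `(G - v)ᶜ = Gᶜ - v`, this gives
`(n + 1) f_r(n) ≤ (n - 1) f_r(n + 1)`, which is the claim.
-/

theorem SimpleGraph.comap_compl {V W : Type*} {f : V → W} (hf : f.Injective)
    (G : SimpleGraph W) : (G.comap f)ᶜ = Gᶜ.comap f := by
  ext a b
  simp [hf.ne_iff]

section FracCliquePacking

variable {n r : ℕ}

def cliqueValue (ψ : Finset (Fin n) → ℝ) : ℝ :=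
  ∑ s : Finset (Fin n), ((s.card.choose 2 : ℝ) - 1) * ψ s

@[simp]
theorem cliqueValue_zero : cliqueValue (0 : Finset (Fin n) → ℝ) = 0 := by
  simp [cliqueValue]

theorem IsFracCliquePacking.zero (G : SimpleGraph (Fin n)) : IsFracCliquePacking r G 0 :=
  ⟨fun _ => by simp, fun _ hs => absurd rfl hs, fun _ _ _ => by simp⟩

/-- The bound `ψ ≤ 1` is automatic: a clique with at least two vertices contains an edge. -/
theorem IsFracCliquePacking.of_nonneg {G : SimpleGraph (Fin n)} {ψ : Finset (Fin n) → ℝ}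
    (h0 : ∀ s, 0 ≤ ψ s)
    (hsupp : ∀ s, ψ s ≠ 0 → G.IsClique (s : Set (Fin n)) ∧ 3 ≤ s.card ∧ s.card ≤ r)
    (hedge : ∀ u v : Fin n, G.Adj u v →
      ∑ s ∈ univ.filter (fun s : Finset (Fin n) => u ∈ s ∧ v ∈ s), ψ s ≤ 1) :
    IsFracCliquePacking r G ψ := by
  refine ⟨fun s => ⟨h0 s, ?_⟩, hsupp, hedge⟩
  by_cases hs : ψ s = 0
  · simp [hs]
  obtain ⟨hclique, h3, -⟩ := hsupp s hs
  obtain ⟨u, hu, v, hv, huv⟩ := one_lt_card.mp (by omega : 1 < s.card)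
  calc ψ s ≤ ∑ t ∈ univ.filter (fun t : Finset (Fin n) => u ∈ t ∧ v ∈ t), ψ t :=
        single_le_sum (fun t _ => h0 t) (by simp [hu, hv])
    _ ≤ 1 := hedge u v (hclique hu hv huv)

theorem bddAbove_cliqueValue_packings (G : SimpleGraph (Fin n)) :
    BddAbove {x : ℝ | ∃ ψ, IsFracCliquePacking r G ψ ∧ x = cliqueValue ψ} := by
  refine ⟨∑ s : Finset (Fin n), (s.card.choose 2 : ℝ), ?_⟩
  rintro x ⟨ψ, hψ, rfl⟩
  refine sum_le_sum fun s _ => ?_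
  obtain ⟨h0, h1⟩ := hψ.1 s
  nlinarith [Nat.cast_nonneg (α := ℝ) (s.card.choose 2)]

theorem cliqueValue_le_nuR {G : SimpleGraph (Fin n)} {ψ : Finset (Fin n) → ℝ}
    (hψ : IsFracCliquePacking r G ψ) : cliqueValue ψ ≤ nuR r n G :=
  le_csSup (bddAbove_cliqueValue_packings G) ⟨ψ, hψ, rfl⟩

theorem nuR_nonneg (G : SimpleGraph (Fin n)) : 0 ≤ nuR r n G :=
  cliqueValue_zero (n := n) ▸ cliqueValue_le_nuR (IsFracCliquePacking.zero G)

theorem exists_packing_lt_cliqueValue {G : SimpleGraph (Fin n)} {x : ℝ} (hx : x < nuR r n G) :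
    ∃ ψ, IsFracCliquePacking r G ψ ∧ x < cliqueValue ψ := by
  obtain ⟨_, ⟨ψ, hψ, rfl⟩, hlt⟩ := exists_lt_of_lt_csSup
    (by exact ⟨0, 0, IsFracCliquePacking.zero G, cliqueValue_zero.symm⟩) hx
  exact ⟨ψ, hψ, hlt⟩

end FracCliquePacking

section MapWeights

variable {n k r : ℕ} (e : Fin n ↪ Fin k)

def mapWeights (ψ : Finset (Fin n) → ℝ) (t : Finset (Fin k)) : ℝ :=
  ∑ s ∈ univ.filter (fun s : Finset (Fin n) => s.map e = t), ψ s

variable {e}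

theorem mapWeights_nonneg {ψ : Finset (Fin n) → ℝ} (h0 : ∀ s, 0 ≤ ψ s) (t : Finset (Fin k)) :
    0 ≤ mapWeights e ψ t :=
  sum_nonneg fun s _ => h0 s

theorem mapWeights_eq_zero {ψ : Finset (Fin n) → ℝ} {t : Finset (Fin k)} {v : Fin k}
    (hv : v ∈ t) (hve : ∀ u, e u ≠ v) : mapWeights e ψ t = 0 := by
  refine sum_eq_zero fun s hs => absurd hv ?_
  obtain rfl := (mem_filter.mp hs).2
  simp [hve]

theorem sum_filter_mapWeights (ψ : Finset (Fin n) → ℝ) (p : Finset (Fin k) → Prop)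
    [DecidablePred p] :
    ∑ t ∈ univ.filter p, mapWeights e ψ t = ∑ s ∈ univ.filter (fun s => p (s.map e)), ψ s := by
  simp only [mapWeights]
  rw [sum_fiberwise_eq_sum_filter]
  simp

theorem cliqueValue_mapWeights (ψ : Finset (Fin n) → ℝ) :
    cliqueValue (mapWeights e ψ) = cliqueValue ψ := by
  simp only [cliqueValue, mapWeights, mul_sum]
  rw [← sum_fiberwise_of_maps_to (g := fun s : Finset (Fin n) => s.map e)
    (t := univ) (fun _ _ => mem_univ _)]
  refine sum_congr rfl fun t _ => sum_congr rfl fun s hs => ?_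
  rw [← (mem_filter.mp hs).2, card_map]

theorem IsFracCliquePacking.map {G : SimpleGraph (Fin k)} {ψ : Finset (Fin n) → ℝ}
    (hψ : IsFracCliquePacking r (G.comap e) ψ) : IsFracCliquePacking r G (mapWeights e ψ) := by
  refine .of_nonneg (mapWeights_nonneg fun s => (hψ.1 s).1) (fun t ht => ?_) fun a b hab => ?_
  · obtain ⟨s, hs, hψs⟩ := exists_ne_zero_of_sum_ne_zero ht
    obtain rfl := (mem_filter.mp hs).2
    obtain ⟨hclique, h3, hr⟩ := hψ.2.1 s hψs
    refine ⟨?_, by simpa using h3, by simpa using hr⟩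
    rw [coe_map]
    rintro _ ⟨u, hu, rfl⟩ _ ⟨w, hw, rfl⟩ huw
    exact hclique hu hw (ne_of_apply_ne e huw)
  · by_cases hrange : (∃ u, e u = a) ∧ ∃ w, e w = b
    · obtain ⟨⟨u, rfl⟩, ⟨w, rfl⟩⟩ := hrange
      rw [sum_filter_mapWeights]
      simpa using hψ.2.2 u w hab
    · refine (sum_eq_zero fun t ht => ?_).le.trans zero_le_one
      obtain ⟨hat, hbt⟩ := (mem_filter.mp ht).2
      rw [not_and_or, not_exists, not_exists] at hrange
      exact hrange.elim (mapWeights_eq_zero hat) (mapWeights_eq_zero hbt)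

end MapWeights

section Averaging

variable {n r : ℕ}

noncomputable def averagedPacking (ψ : Fin (n + 1) → Finset (Fin n) → ℝ)
    (t : Finset (Fin (n + 1))) : ℝ :=
  ((n : ℝ) - 1)⁻¹ * ∑ v, mapWeights v.succAboveEmb (ψ v) t

theorem IsFracCliquePacking.average (hn : 1 ≤ n) {G : SimpleGraph (Fin (n + 1))}
    {ψ : Fin (n + 1) → Finset (Fin n) → ℝ}
    (hψ : ∀ v, IsFracCliquePacking r (G.comap v.succAbove) (ψ v)) :
    IsFracCliquePacking r G (averagedPacking ψ) := by
  have hn1 : (0 : ℝ) ≤ n - 1 := sub_nonneg.mpr (Nat.one_le_cast.mpr hn)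
  have hmap v : IsFracCliquePacking r G (mapWeights v.succAboveEmb (ψ v)) := (hψ v).map
  refine .of_nonneg (fun t => mul_nonneg (inv_nonneg.mpr hn1)
    (sum_nonneg fun v _ => mapWeights_nonneg (fun s => ((hψ v).1 s).1) t)) (fun t ht => ?_) ?_
  · obtain ⟨v, -, hv⟩ := exists_ne_zero_of_sum_ne_zero (right_ne_zero_of_mul ht)
    exact (hmap v).2.1 t hv
  intro a b hab
  set edgeWeight : Fin (n + 1) → ℝ := fun v =>
    ∑ t ∈ univ.filter (fun t : Finset (Fin (n + 1)) => a ∈ t ∧ b ∈ t),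
      mapWeights v.succAboveEmb (ψ v) t
  have hlost : ∑ v ∈ {a, b}, edgeWeight v = 0 := by
    refine sum_eq_zero fun v hv => sum_eq_zero fun t ht => ?_
    obtain ⟨hat, hbt⟩ := (mem_filter.mp ht).2
    rcases mem_insert.mp hv with rfl | hv
    · exact mapWeights_eq_zero hat (Fin.succAbove_ne v)
    obtain rfl := mem_singleton.mp hv
    exact mapWeights_eq_zero hbt (Fin.succAbove_ne v)
  have hkept : ∑ v ∈ {a, b}ᶜ, edgeWeight v ≤ n - 1 := by
    have hcard : (({a, b} : Finset (Fin (n + 1)))ᶜ).card = n - 1 := by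
      rw [card_compl, card_pair hab.ne, Fintype.card_fin]
      omega
    calc ∑ v ∈ {a, b}ᶜ, edgeWeight v ≤ (({a, b} : Finset (Fin (n + 1)))ᶜ).card • (1 : ℝ) :=
          sum_le_card_nsmul _ _ _ fun v _ => (hmap v).2.2 a b hab
      _ = n - 1 := by rw [hcard, nsmul_one, Nat.cast_pred hn]
  calc ∑ t ∈ univ.filter (fun t : Finset (Fin (n + 1)) => a ∈ t ∧ b ∈ t), averagedPacking ψ t
      = ((n : ℝ) - 1)⁻¹ * ∑ v, edgeWeight v := by
        simp only [averagedPacking, edgeWeight, ← mul_sum]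
        rw [sum_comm]
    _ ≤ 1 := by
        rw [← sum_compl_add_sum {a, b}, hlost, add_zero]
        exact inv_mul_le_one_of_le₀ hkept hn1

theorem cliqueValue_averagedPacking (ψ : Fin (n + 1) → Finset (Fin n) → ℝ) :
    cliqueValue (averagedPacking ψ) = ((n : ℝ) - 1)⁻¹ * ∑ v, cliqueValue (ψ v) := by
  calc cliqueValue (averagedPacking ψ)
      = ((n : ℝ) - 1)⁻¹ * ∑ v, cliqueValue (mapWeights v.succAboveEmb (ψ v)) := by
        simp only [cliqueValue, averagedPacking, mul_sum]
        exact sum_comm.trans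
          (sum_congr rfl fun v _ => sum_congr rfl fun t _ => mul_left_comm _ _ _)
    _ = ((n : ℝ) - 1)⁻¹ * ∑ v, cliqueValue (ψ v) := by simp only [cliqueValue_mapWeights]

theorem sum_nuR_comap_succAbove_le (hn : 2 ≤ n) (G : SimpleGraph (Fin (n + 1))) :
    ∑ v : Fin (n + 1), nuR r n (G.comap v.succAbove) ≤ ((n : ℝ) - 1) * nuR r (n + 1) G := by
  have hn1 : (0 : ℝ) < n - 1 := sub_pos.mpr (by exact_mod_cast hn)
  refine le_of_forall_pos_lt_add fun ε hε => ?_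
  have hδ : 0 < ε / (n + 1) := by positivity
  choose ψ hψ hlt using fun v : Fin (n + 1) =>
    exists_packing_lt_cliqueValue (sub_lt_self (nuR r n (G.comap v.succAbove)) hδ)
  have hsum : ∑ v, cliqueValue (ψ v) ≤ ((n : ℝ) - 1) * nuR r (n + 1) G := by
    have := cliqueValue_le_nuR (IsFracCliquePacking.average (by omega) hψ)
    rwa [cliqueValue_averagedPacking, inv_mul_le_iff₀ hn1] at this
  calc ∑ v, nuR r n (G.comap v.succAbove)
      < ∑ v : Fin (n + 1), (cliqueValue (ψ v) + ε / (n + 1)) :=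
        sum_lt_sum_of_nonempty univ_nonempty fun v _ => by linarith [hlt v]
    _ = ∑ v, cliqueValue (ψ v) + ε := by
        rw [sum_add_distrib, sum_const, card_univ, Fintype.card_fin, nsmul_eq_mul,
          Nat.cast_add_one, mul_div_cancel₀ _ (by positivity)]
    _ ≤ ((n : ℝ) - 1) * nuR r (n + 1) G + ε := by linarith

end Averaging

section FR

variable {r n : ℕ}

theorem fR_le_nuR_add_nuR_compl (G : SimpleGraph (Fin n)) : fR r n ≤ nuR r n G + nuR r n Gᶜ :=
  csInf_le ⟨0, by rintro _ ⟨H, rfl⟩; exact add_nonneg (nuR_nonneg H) (nuR_nonneg Hᶜ)⟩ ⟨G, rfl⟩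

theorem le_fR {x : ℝ} (h : ∀ G : SimpleGraph (Fin n), x ≤ nuR r n G + nuR r n Gᶜ) :
    x ≤ fR r n :=
  le_csInf ⟨_, ⊥, rfl⟩ (by rintro _ ⟨G, rfl⟩; exact h G)

theorem add_one_mul_fR_le (hn : 2 ≤ n) :
    ((n : ℝ) + 1) * fR r n ≤ ((n : ℝ) - 1) * fR r (n + 1) := by
  have hn1 : (0 : ℝ) < n - 1 := sub_pos.mpr (by exact_mod_cast hn)
  rw [← div_le_iff₀' hn1]
  refine le_fR fun G => ?_
  rw [div_le_iff₀' hn1]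
  calc ((n : ℝ) + 1) * fR r n = ∑ _v : Fin (n + 1), fR r n := by simp
    _ ≤ ∑ v : Fin (n + 1), (nuR r n (G.comap v.succAbove) + nuR r n (Gᶜ.comap v.succAbove)) :=
        sum_le_sum fun v _ =>
          SimpleGraph.comap_compl (Fin.succAbove_right_injective (p := v)) G ▸
            fR_le_nuR_add_nuR_compl _
    _ ≤ ((n : ℝ) - 1) * (nuR r (n + 1) G + nuR r (n + 1) Gᶜ) := by
        rw [sum_add_distrib, mul_add]
        exact add_le_add (sum_nuR_comap_succAbove_le hn G) (sum_nuR_comap_succAbove_le hn Gᶜ)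

end FR

theorem fR_div_monotone_general (r : ℕ) :
    ∀ n : ℕ, 2 ≤ n →
      fR r n / (n * (n - 1) : ℝ) ≤ fR r (n + 1) / ((n + 1) * n : ℝ) := by
  intro n hn
  have hn2 : (2 : ℝ) ≤ n := by exact_mod_cast hn
  rw [div_le_div_iff₀ (by nlinarith) (by positivity)]
  linear_combination (n : ℝ) * add_one_mul_fR_le (r := r) hn

/-- for fixed `r ≥ 3`, the sequence `f_r(n) / (n(n−1))` is
monotonically nondecreasing in `n`. -/
theorem fR_div_monotone (r : ℕ) (hr : 3 ≤ r) :
    ∀ n : ℕ, 2 ≤ n →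
      fR r n / (n * (n - 1) : ℝ) ≤ fR r (n + 1) / ((n + 1) * n : ℝ) :=
  fR_div_monotone_general r
end

section
/- In any 2-edge-coloring of K_20 with a red copy N of K_5 and no blue copy of K_4, if some vertex v has at least nine red neighbors and at least nine blue neighbors, then K_20 contains two vertex-disjoint red copies of K_4. -/
/-!
Both the red and the blue neighbourhood of `v` have at least nine vertices, and `R(3,4) ≤ 9`
holds for either order of the colours. As there is no blue `K₄`, the red neighbourhood contains
a red triangle, which becomes a red `K₄` together with `v`, and the blue neighbourhood contains
a red `K₄`; the two are disjoint.

`R(3,4) ≤ 9` follows from `R(2,4) = 4` and `R(3,3) = 6` applied to neighbourhoods, except when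
every vertex has exactly three red neighbours among the other eight, which is impossible by the
handshake lemma.
-/

open Finset

/-- `s` is monochromatic of color `col` under the edge-coloring `c`
(`true` = red, `false` = blue). -/
def IsMonoColor {N : ℕ} (c : Fin N → Fin N → Bool) (col : Bool)
    (s : Finset (Fin N)) : Prop :=
  ∀ u ∈ s, ∀ v ∈ s, u ≠ v → c u v = col

variable {N : ℕ} {c : Fin N → Fin N → Bool} {col : Bool} {k : ℕ} {v : Fin N}
  {S T : Finset (Fin N)}

def HasMonoClique (c : Fin N → Fin N → Bool) (col : Bool) (k : ℕ) (S : Finset (Fin N)) :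
    Prop :=
  ∃ t ⊆ S, #t = k ∧ IsMonoColor c col t

def colorNbhd (c : Fin N → Fin N → Bool) (col : Bool) (v : Fin N) (S : Finset (Fin N)) :
    Finset (Fin N) :=
  S.filter fun u => u ≠ v ∧ c v u = col

lemma IsMonoColor.mono (hST : S ⊆ T) (hT : IsMonoColor c col T) : IsMonoColor c col S :=
  fun u hu w hw => hT u (hST hu) w (hST hw)

lemma isMonoColor_singleton (u : Fin N) : IsMonoColor c col {u} := by
  simp [IsMonoColor]

lemma IsMonoColor.insert (hsymm : ∀ u w, c u w = c w u) (hS : IsMonoColor c col S)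
    (hv : ∀ u ∈ S, c v u = col) : IsMonoColor c col (insert v S) := by
  intro a ha b hb hab
  rcases mem_insert.1 ha with rfl | ha' <;> rcases mem_insert.1 hb with rfl | hb'
  · exact absurd rfl hab
  · exact hv b hb'
  · exact hsymm a _ ▸ hv a ha'
  · exact hS a ha' b hb' hab

lemma HasMonoClique.mono (hST : S ⊆ T) : HasMonoClique c col k S → HasMonoClique c col k T :=
  fun ⟨t, htS, htk, ht⟩ => ⟨t, htS.trans hST, htk, ht⟩

lemma colorNbhd_subset : colorNbhd c col v S ⊆ S := filter_subset _ _

lemma insert_colorNbhd_subset (hv : v ∈ S) : insert v (colorNbhd c col v S) ⊆ S :=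
  insert_subset hv colorNbhd_subset

lemma card_colorNbhd_add_card_colorNbhd_not (hv : v ∈ S) :
    #(colorNbhd c col v S) + #(colorNbhd c (!col) v S) + 1 = #S := by
  have hsplit := card_filter_add_card_filter_not (s := S.erase v) (fun u => c v u = col)
  have hcol : (S.erase v).filter (fun u => c v u = col) = colorNbhd c col v S := by
    ext u; simp [colorNbhd]; tauto
  have hnot : (S.erase v).filter (fun u => ¬ c v u = col) = colorNbhd c (!col) v S := by
    ext u; simp [colorNbhd, Bool.eq_not]; tauto
  rw [hcol, hnot, card_erase_of_mem hv] at hsplit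
  have := card_pos.2 ⟨v, hv⟩
  omega

lemma disjoint_insert_colorNbhd_colorNbhd_not :
    Disjoint (insert v (colorNbhd c col v S)) (colorNbhd c (!col) v T) := by
  simp only [disjoint_left, mem_insert, colorNbhd, mem_filter]
  rintro u (rfl | ⟨-, -, hu⟩) ⟨-, hne, hu'⟩
  · exact hne rfl
  · simp [hu] at hu'

lemma HasMonoClique.insert_colorNbhd (hsymm : ∀ u w, c u w = c w u)
    (h : HasMonoClique c col k (colorNbhd c col v S)) :
    HasMonoClique c col (k + 1) (insert v (colorNbhd c col v S)) := by
  obtain ⟨t, ht, rfl, hmono⟩ := h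
  have hnbr : ∀ u ∈ t, u ≠ v ∧ c v u = col := fun u hu => (mem_filter.1 (ht hu)).2
  exact ⟨insert v t, insert_subset_insert _ ht,
    card_insert_of_notMem fun hv => (hnbr v hv).1 rfl,
    hmono.insert hsymm fun u hu => (hnbr u hu).2⟩

lemma even_card_of_forall_odd_card_colorNbhd (hsymm : ∀ u w, c u w = c w u)
    (hodd : ∀ v ∈ S, Odd #(colorNbhd c col v S)) : Even #S := by
  classical
  let G : SimpleGraph (Fin N) :=
    { Adj u w := u ∈ S ∧ w ∈ S ∧ u ≠ w ∧ c u w = col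
      symm := ⟨fun u w ⟨hu, hw, hne, huw⟩ => ⟨hw, hu, hne.symm, hsymm u w ▸ huw⟩⟩
      loopless := ⟨fun u h => h.2.2.1 rfl⟩ }
  have hnbr (v : Fin N) : G.neighborFinset v = if v ∈ S then colorNbhd c col v S else ∅ := by
    ext u
    split_ifs with hv <;> simp [G, colorNbhd, hv, ne_comm]
  have hodd_deg : ({v | Odd (G.degree v)} : Finset (Fin N)) = S := by
    ext v
    by_cases hv : v ∈ S <;> simp [← G.card_neighborFinset_eq_degree, hnbr, hv, hodd]
  simpa [hodd_deg] using G.even_card_odd_degree_vertices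

lemma hasMonoClique_two_or_of_le_card (hsymm : ∀ u w, c u w = c w u) (hS : k ≤ #S) :
    HasMonoClique c col 2 S ∨ HasMonoClique c (!col) k S := by
  by_cases hedge : ∃ a ∈ S, ∃ b ∈ S, a ≠ b ∧ c a b = col
  · obtain ⟨a, ha, b, hb, hab, hcol⟩ := hedge
    refine .inl ⟨{a, b}, by simp [insert_subset_iff, ha, hb], card_pair hab, ?_⟩
    exact (isMonoColor_singleton b).insert hsymm (by simpa using hcol)
  · push Not at hedge
    obtain ⟨t, htS, htk⟩ := exists_subset_card_eq hS
    refine .inr ⟨t, htS, htk, fun a ha b hb hab => ?_⟩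
    exact Bool.eq_not.2 (hedge a (htS ha) b (htS hb) hab)

lemma exists_hasMonoClique_three_of_six_le_card (hsymm : ∀ u w, c u w = c w u) (hS : 6 ≤ #S) :
    ∃ col, HasMonoClique c col 3 S := by
  obtain ⟨v, hv⟩ : S.Nonempty := card_pos.1 (by omega)
  obtain ⟨col, hcol⟩ : ∃ col, 3 ≤ #(colorNbhd c col v S) := by
    have := card_colorNbhd_add_card_colorNbhd_not (c := c) (col := true) hv
    rw [Bool.not_true] at this
    by_cases h : 3 ≤ #(colorNbhd c true v S)
    · exact ⟨true, h⟩
    · exact ⟨false, by omega⟩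
  rcases hasMonoClique_two_or_of_le_card (col := col) hsymm hcol with h | h
  · exact ⟨col, (h.insert_colorNbhd hsymm).mono (insert_colorNbhd_subset hv)⟩
  · exact ⟨!col, h.mono colorNbhd_subset⟩

lemma hasMonoClique_three_or_four_of_card_eq_nine (hsymm : ∀ u w, c u w = c w u)
    (hS : #S = 9) : HasMonoClique c col 3 S ∨ HasMonoClique c (!col) 4 S := by
  by_cases h4 : ∃ v ∈ S, 4 ≤ #(colorNbhd c col v S)
  · obtain ⟨v, hv, h4⟩ := h4
    rcases hasMonoClique_two_or_of_le_card hsymm h4 with h | h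
    · exact .inl ((h.insert_colorNbhd hsymm).mono (insert_colorNbhd_subset hv))
    · exact .inr (h.mono colorNbhd_subset)
  by_cases h6 : ∃ v ∈ S, 6 ≤ #(colorNbhd c (!col) v S)
  · obtain ⟨v, hv, h6⟩ := h6
    obtain ⟨col', h⟩ := exists_hasMonoClique_three_of_six_le_card hsymm h6
    rcases Bool.eq_or_eq_not col' col with rfl | rfl
    · exact .inl (h.mono colorNbhd_subset)
    · exact .inr ((h.insert_colorNbhd hsymm).mono (insert_colorNbhd_subset hv))
  -- Otherwise every vertex has exactly three `col`-neighbours among the other eight,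
  -- which the handshake lemma forbids since `#S` is odd.
  push Not at h4 h6
  have hodd : ∀ v ∈ S, Odd #(colorNbhd c col v S) := fun v hv => by
    have := card_colorNbhd_add_card_colorNbhd_not (c := c) (col := col) hv
    exact ⟨1, by have := h4 v hv; have := h6 v hv; omega⟩
  exact absurd (hS ▸ even_card_of_forall_odd_card_colorNbhd hsymm hodd) (by decide)

lemma hasMonoClique_three_or_four_of_nine_le_card (hsymm : ∀ u w, c u w = c w u) (hS : 9 ≤ #S) :
    HasMonoClique c col 3 S ∨ HasMonoClique c (!col) 4 S := by
  obtain ⟨T, hTS, hT⟩ := exists_subset_card_eq hS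
  exact (hasMonoClique_three_or_four_of_card_eq_nine hsymm hT).imp (.mono hTS) (.mono hTS)

theorem two_disjoint_red_K4_of_balanced_vertex_general (c : Fin 20 → Fin 20 → Bool)
    (hsymm : ∀ u v, c u v = c v u)
    (hnoblue : ¬ ∃ s : Finset (Fin 20), s.card = 4 ∧ IsMonoColor c false s)
    (v : Fin 20)
    (hred : 9 ≤ (Finset.univ.filter (fun u => u ≠ v ∧ c v u = true)).card)
    (hblue : 9 ≤ (Finset.univ.filter (fun u => u ≠ v ∧ c v u = false)).card) :
    ∃ s₁ s₂ : Finset (Fin 20), s₁.card = 4 ∧ s₂.card = 4 ∧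
      IsMonoColor c true s₁ ∧ IsMonoColor c true s₂ ∧ Disjoint s₁ s₂ := by
  have hnoK4 {S : Finset (Fin 20)} : ¬ HasMonoClique c false 4 S :=
    fun ⟨s, _, hs, hmono⟩ => hnoblue ⟨s, hs, hmono⟩
  obtain ⟨s₁, hs₁, hs₁card, hs₁red⟩ :
      HasMonoClique c true 4 (insert v (colorNbhd c true v univ)) :=
    ((hasMonoClique_three_or_four_of_nine_le_card (col := true) hsymm hred).resolve_right
      hnoK4).insert_colorNbhd hsymm
  obtain ⟨s₂, hs₂, hs₂card, hs₂red⟩ : HasMonoClique c true 4 (colorNbhd c false v univ) :=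
    (hasMonoClique_three_or_four_of_nine_le_card (col := false) hsymm hblue).resolve_left
      fun h => hnoK4 (h.insert_colorNbhd hsymm)
  exact ⟨s₁, s₂, hs₁card, hs₂card, hs₁red, hs₂red,
    disjoint_insert_colorNbhd_colorNbhd_not.mono hs₁ hs₂⟩

/-- in a 2-edge-coloring of `K_20` with a red `K_5` and no blue
`K_4`, if some vertex `v` has at least nine red neighbors and at least nine
blue neighbors, then there are two vertex-disjoint red copies of `K_4`. -/
theorem two_disjoint_red_K4_of_balanced_vertex (c : Fin 20 → Fin 20 → Bool)
    (hsymm : ∀ u v, c u v = c v u)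
    (N : Finset (Fin 20)) (hN : N.card = 5) (hNred : IsMonoColor c true N)
    (hnoblue : ¬ ∃ s : Finset (Fin 20), s.card = 4 ∧ IsMonoColor c false s)
    (v : Fin 20)
    (hred : 9 ≤ (Finset.univ.filter (fun u => u ≠ v ∧ c v u = true)).card)
    (hblue : 9 ≤ (Finset.univ.filter (fun u => u ≠ v ∧ c v u = false)).card) :
    ∃ s₁ s₂ : Finset (Fin 20), s₁.card = 4 ∧ s₂.card = 4 ∧
      IsMonoColor c true s₁ ∧ IsMonoColor c true s₂ ∧ Disjoint s₁ s₂ :=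
  two_disjoint_red_K4_of_balanced_vertex_general c hsymm hnoblue v hred hblue
end

section
/- Let H_ℓ(G) be the graph built from a graph G on m vertices by joining G completely to two edgeless sets of ℓ vertices, each of which is in turn completely joined to its own clique K_ℓ, with the two cliques K_ℓ completely joined to each other (as in the de Caen–Erdős–Pullman–Wormald construction). Then the complement of H_ℓ(G) is isomorphic to H_ℓ(complement of G). In particular, if G is self-complementary then so is H_ℓ(G). -/
/-!
In the complement of `H_ℓ(G)`, the vertices of `G` span `Gᶜ` and are joined to `B₁ ∪ B₂`;
the blocks `B₁, B₂` become edgeless, `A₁, A₂` become cliques joined to each other, and `Aᵢ`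
is joined to `B₃₋ᵢ`. Renaming `Bᵢ` as `Aᵢ` and `Aᵢ` as `B₃₋ᵢ` therefore turns `H_ℓ(G)ᶜ` into
`H_ℓ(Gᶜ)`. As `H_ℓ` respects isomorphisms of `G`, self-complementarity of `G` passes to `H_ℓ(G)`.
-/

/-- Vertices of `H_ℓ(G)`: the vertices of `G` together with four blocks of
size `ℓ`, encoded as `(side, copy, index)` where `side = false` for the
edgeless blocks `A₁, A₂` and `side = true` for the clique blocks `B₁, B₂`,
and `copy : Bool` distinguishes the two copies. -/
abbrev HVert (m ℓ : ℕ) := Fin m ⊕ (Bool × Bool × Fin ℓ)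

/-- One direction of the edge relation of `H_ℓ(G)`:
`G` is joined completely to `A₁` and `A₂`; `Aᵢ` is joined completely to `Bᵢ`;
`B₁` and `B₂` are cliques completely joined to each other; no other edges. -/
def HRel {m ℓ : ℕ} (G : SimpleGraph (Fin m)) : HVert m ℓ → HVert m ℓ → Prop
  | Sum.inl i, Sum.inl j => G.Adj i j
  | Sum.inl _, Sum.inr (s, _, _) => s = false
  | Sum.inr (s₁, c₁, _), Sum.inr (s₂, c₂, _) =>
      (s₁ = false ∧ s₂ = true ∧ c₁ = c₂) ∨ (s₁ = true ∧ s₂ = true)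
  | Sum.inr _, Sum.inl _ => False

/-- The de Caen–Erdős–Pullman–Wormald graph `H_ℓ(G)`. -/
def HGraph {m : ℕ} (ℓ : ℕ) (G : SimpleGraph (Fin m)) : SimpleGraph (HVert m ℓ) :=
  SimpleGraph.fromRel (HRel G)

namespace HGraph

variable {m ℓ : ℕ} {G : SimpleGraph (Fin m)}

@[simp]
lemma adj_inl_inl {i j : Fin m} :
    (HGraph ℓ G).Adj (.inl i) (.inl j) ↔ G.Adj i j := by
  simp only [HGraph, SimpleGraph.fromRel_adj, HRel, ne_eq, Sum.inl.injEq]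
  exact ⟨fun ⟨_, h⟩ => h.elim id G.adj_symm, fun h => ⟨h.ne, .inl h⟩⟩

@[simp]
lemma adj_inl_inr {i : Fin m} {s c : Bool} {k : Fin ℓ} :
    (HGraph ℓ G).Adj (.inl i) (.inr (s, c, k)) ↔ s = false := by
  simp [HGraph, HRel]

@[simp]
lemma adj_inr_inl {i : Fin m} {s c : Bool} {k : Fin ℓ} :
    (HGraph ℓ G).Adj (.inr (s, c, k)) (.inl i) ↔ s = false :=
  (HGraph ℓ G).adj_comm _ _ |>.trans adj_inl_inr

@[simp]
lemma adj_inr_inr {s c s' c' : Bool} {k k' : Fin ℓ} :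
    (HGraph ℓ G).Adj (.inr (s, c, k)) (.inr (s', c', k')) ↔
      (s, c, k) ≠ (s', c', k') ∧ ((s ≠ s' ∧ c = c') ∨ (s = true ∧ s' = true)) := by
  simp only [HGraph, SimpleGraph.fromRel_adj, HRel, ne_eq, Sum.inr.injEq]
  cases s <;> cases s' <;> simp [eq_comm]

def complEquiv (m ℓ : ℕ) : HVert m ℓ ≃ HVert m ℓ :=
  Equiv.sumCongr (Equiv.refl _)
    { toFun := fun (s, c, k) => (!s, if s then c else !c, k)
      invFun := fun (s, c, k) => (!s, if s then !c else c, k)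
      left_inv := by rintro ⟨_ | _, c, k⟩ <;> simp
      right_inv := by rintro ⟨_ | _, c, k⟩ <;> simp }

def complIso : (HGraph ℓ G)ᶜ ≃g HGraph ℓ Gᶜ where
  toEquiv := complEquiv m ℓ
  map_rel_iff' := by
    rintro (i | ⟨s, c, k⟩) (j | ⟨s', c', k'⟩) <;> simp [complEquiv]
    cases s <;> cases s' <;> cases c <;> cases c' <;> simp

def congr {G' : SimpleGraph (Fin m)} (e : G ≃g G') : HGraph ℓ G ≃g HGraph ℓ G' where
  toEquiv := Equiv.sumCongr e.toEquiv (Equiv.refl _)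
  map_rel_iff' := by
    rintro (i | ⟨s, c, k⟩) (j | ⟨s', c', k'⟩) <;> simp [e.map_adj_iff]

end HGraph

/-- the complement of `H_ℓ(G)` is isomorphic to `H_ℓ(Gᶜ)`; in
particular, if `G` is self-complementary then so is `H_ℓ(G)`. -/
theorem HGraph_compl_iso (m ℓ : ℕ) (G : SimpleGraph (Fin m)) :
    Nonempty ((HGraph ℓ G)ᶜ ≃g HGraph ℓ Gᶜ) ∧
      (Nonempty (G ≃g Gᶜ) → Nonempty (HGraph ℓ G ≃g (HGraph ℓ G)ᶜ)) :=
  ⟨⟨HGraph.complIso⟩, fun ⟨e⟩ => ⟨(HGraph.congr e).trans HGraph.complIso.symm⟩⟩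
end
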